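/- arXiv:2312.16370 — 5 statements merged into one kernel-verified Lean document; each statement's English description precedes it below -/
import Mathlib

section
/- Let n > 30, ε ≤ 1, and δ ≤ 0.1. Consider graphs on the vertex set {s, t, v₁, …, v_n} where for each τ ∈ {0,1}ⁿ the graph G_τ has, for every i, a unit-weight edge between s and v_i if τ_i = 1 and a unit-weight edge between t and v_i if τ_i = 0 (and no other edges); note the minimum s-t cut weight of every G_τ is 0. Then for every randomized mechanism M mapping weighted graphs on this vertex set to s-t cuts that is (ε, δ)-differentially private with respect to edge-neighboring graphs, there exists τ ∈ {0,1}ⁿ such that the expected weight in G_τ of the cut M(G_τ) is at least n/20. -/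
open Finset

/-- `w(E(S,T))`: for disjoint vertex sets `S, T` this is the total weight of edges
between `S` and `T` (each unordered pair counted once). -/
def cutWeight {V : Type} [Fintype V] [DecidableEq V] (w : V → V → ℝ)
    (S T : Finset V) : ℝ :=
  ∑ u ∈ S, ∑ v ∈ T, w u v

/-- A valid weight function of a weighted graph: nonnegative, symmetric and zero
on the diagonal. -/
def IsWeight {V : Type} (w : V → V → ℝ) : Prop :=
  (∀ u v, 0 ≤ w u v) ∧ (∀ u v, w u v = w v u) ∧ (∀ u, w u u = 0)

/-- Two weight functions on the same vertex set are (edge-)neighboring if they agree on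
all but one unordered pair of vertices, where they differ by at most `1`. -/
def Neighboring {V : Type} (w w' : V → V → ℝ) : Prop :=
  ∃ a b : V, |w a b - w' a b| ≤ 1 ∧
    ∀ u v, ¬((u = a ∧ v = b) ∨ (u = b ∧ v = a)) → w u v = w' u v

/-- The terminal `s` (for `b = true`, i.e. `τ_i = 1`) or `t` (for `b = false`) in the
vertex set `{s, t, v₁, …, v_n}` realized as `Fin (n + 2)` with `s = 0`, `t = 1`. -/
def termOf (n : ℕ) (b : Bool) : Fin (n + 2) :=
  if b then ⟨0, by omega⟩ else ⟨1, by omega⟩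

/-- The non-terminal vertex `v_i` in the vertex set `{s, t, v₁, …, v_n}` realized as
`Fin (n + 2)`. -/
def vtx (n : ℕ) (i : Fin n) : Fin (n + 2) := ⟨(i : ℕ) + 2, by omega⟩

/-- The weight function of the graph `G_τ`: for each `i`, a unit-weight edge between
`s` and `v_i` if `τ_i = 1`, and a unit-weight edge between `t` and `v_i` if `τ_i = 0`;
no other edges. -/
def gTau (n : ℕ) (τ : Fin n → Bool) (u v : Fin (n + 2)) : ℝ :=
  if ∃ i : Fin n, (u = termOf n (τ i) ∧ v = vtx n i) ∨ (v = termOf n (τ i) ∧ u = vtx n i)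
    then 1 else 0

/-! Flipping the bit `τ i` turns `G_τ` into `G_τ'` through two neighbouring steps (isolate `v_i`,
then attach it to the other terminal), so group privacy makes the output distributions on the two
graphs `(2ε, (e^ε + 1)δ)`-close. Misclassifying `v_i` on one input is the complementary event of
misclassifying it on the other, hence the two misclassification probabilities sum to at least
`1/10`. On an `s`-`t` cut the weight in `G_τ` counts the misclassified `v_i`, so averaging over
all `τ` gives one with expected cut weight at least `n/20`. -/

namespace PMF

variable {α : Type*}

noncomputable def realProb (p : PMF α) (A : Set α) : ℝ := (p.toOuterMeasure A).toReal

lemma realProb_nonneg (p : PMF α) (A : Set α) : 0 ≤ p.realProb A := ENNReal.toReal_nonneg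

lemma toOuterMeasure_ne_top (p : PMF α) (A : Set α) : p.toOuterMeasure A ≠ ⊤ :=
  ne_top_of_le_ne_top ENNReal.one_ne_top <|
    ((p.toOuterMeasure_apply_eq_one_iff Set.univ).2 (Set.subset_univ _)) ▸
      p.toOuterMeasure.mono (Set.subset_univ A)

lemma realProb_le_of_toOuterMeasure_le {p p' : PMF α} {ε δ : ℝ} {A : Set α}
    (h : p.toOuterMeasure A ≤
      ENNReal.ofReal (Real.exp ε) * p'.toOuterMeasure A + ENNReal.ofReal δ) :
    p.realProb A ≤ Real.exp ε * p'.realProb A + max δ 0 := by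
  have hfin : ENNReal.ofReal (Real.exp ε) * p'.toOuterMeasure A ≠ ⊤ :=
    ENNReal.mul_ne_top ENNReal.ofReal_ne_top (p'.toOuterMeasure_ne_top A)
  have h' := ENNReal.toReal_mono (ENNReal.add_ne_top.2 ⟨hfin, ENNReal.ofReal_ne_top⟩) h
  rwa [ENNReal.toReal_add hfin ENNReal.ofReal_ne_top, ENNReal.toReal_mul,
    ENNReal.toReal_ofReal (Real.exp_nonneg ε), ENNReal.toReal_ofReal'] at h'

variable [Fintype α]

lemma realProb_eq_sum (p : PMF α) (A : Set α) :
    p.realProb A = ∑ x, A.indicator (fun x => (p x).toReal) x := by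
  rw [realProb, toOuterMeasure_apply_fintype, ENNReal.toReal_sum fun x _ => ?_]
  · refine Finset.sum_congr rfl fun x _ => ?_
    by_cases hx : x ∈ A <;> simp [hx]
  · by_cases hx : x ∈ A <;> simp [hx, p.apply_ne_top]

lemma sum_toReal (p : PMF α) : ∑ x, (p x).toReal = 1 := by
  rw [← ENNReal.toReal_sum fun x _ => p.apply_ne_top x, ← tsum_fintype (L := .unconditional _),
    p.tsum_coe, ENNReal.toReal_one]

lemma realProb_compl (p : PMF α) (A : Set α) : p.realProb Aᶜ = 1 - p.realProb A := by
  rw [realProb_eq_sum, realProb_eq_sum, eq_sub_iff_add_eq, ← Finset.sum_add_distrib,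
    ← p.sum_toReal]
  simp only [Set.indicator_compl_add_self_apply]

lemma sum_toReal_mul_eq_sum_realProb {ι : Type*} [Fintype ι] (p : PMF α) (f : α → ℝ)
    (E : ι → Set α) (hf : ∀ x ∈ p.support, f x = ∑ i, (E i).indicator 1 x) :
    ∑ x, (p x).toReal * f x = ∑ i, p.realProb (E i) := by
  simp_rw [realProb_eq_sum]
  rw [Finset.sum_comm]
  refine Finset.sum_congr rfl fun x _ => ?_
  by_cases hx : x ∈ p.support
  · rw [hf x hx, Finset.mul_sum]
    refine Finset.sum_congr rfl fun i _ => ?_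
    by_cases hxi : x ∈ E i <;> simp [hxi]
  · have hpx : p x = 0 := (p.apply_eq_zero_iff x).2 hx
    rw [hpx, ENNReal.toReal_zero, zero_mul]
    exact (Finset.sum_eq_zero fun i _ =>
      Set.indicator_apply_eq_zero.2 fun _ => by simp [hpx]).symm

end PMF

section WeightedGraph

variable {V : Type}

def IsEdgeDP {β : Type*} (M : (V → V → ℝ) → PMF β) (ε δ : ℝ) : Prop :=
  ∀ w w', IsWeight w → IsWeight w' → Neighboring w w' →
    ∀ O : Set β, (M w).toOuterMeasure O ≤
      ENNReal.ofReal (Real.exp ε) * (M w').toOuterMeasure O + ENNReal.ofReal δ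

lemma IsEdgeDP.realProb_le_of_neighboring₂ {β : Type*} {M : (V → V → ℝ) → PMF β} {ε δ : ℝ}
    (hM : IsEdgeDP M ε δ) {w₁ w₂ w₃ : V → V → ℝ} (hw₁ : IsWeight w₁) (hw₂ : IsWeight w₂)
    (hw₃ : IsWeight w₃) (h₁₂ : Neighboring w₁ w₂) (h₂₃ : Neighboring w₂ w₃) (A : Set β) :
    (M w₁).realProb A ≤
      Real.exp ε * (Real.exp ε * (M w₃).realProb A + max δ 0) + max δ 0 := by
  have h₁ := PMF.realProb_le_of_toOuterMeasure_le (hM w₁ w₂ hw₁ hw₂ h₁₂ A)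
  have h₂ := PMF.realProb_le_of_toOuterMeasure_le (hM w₂ w₃ hw₂ hw₃ h₂₃ A)
  have := mul_le_mul_of_nonneg_left h₂ (Real.exp_nonneg ε)
  linarith

lemma Neighboring.symm {w w' : V → V → ℝ} (h : Neighboring w w') : Neighboring w' w := by
  obtain ⟨a, b, hab, heq⟩ := h
  exact ⟨a, b, by rwa [abs_sub_comm], fun u v huv => (heq u v huv).symm⟩

variable [DecidableEq V]

def isolateVertex (w : V → V → ℝ) (x : V) (u v : V) : ℝ :=
  if u = x ∨ v = x then 0 else w u v

lemma isWeight_isolateVertex {w : V → V → ℝ} (hw : IsWeight w) (x : V) :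
    IsWeight (isolateVertex w x) := by
  obtain ⟨hnonneg, hsymm, hdiag⟩ := hw
  refine ⟨fun u v => ?_, fun u v => ?_, fun u => ?_⟩ <;> unfold isolateVertex
  · split_ifs
    exacts [le_rfl, hnonneg u v]
  · rw [hsymm u v]
    exact if_congr or_comm rfl rfl
  · split_ifs
    exacts [rfl, hdiag u]

lemma isolateVertex_congr {w w' : V → V → ℝ} {x : V}
    (h : ∀ u v, u ≠ x → v ≠ x → w u v = w' u v) :
    isolateVertex w x = isolateVertex w' x := by
  funext u v
  unfold isolateVertex
  split_ifs with hx
  · rfl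
  · push Not at hx
    exact h u v hx.1 hx.2

lemma neighboring_isolateVertex {w : V → V → ℝ} (hsymm : ∀ u v, w u v = w v u) {a x : V}
    (hx : ∀ y, y ≠ a → w y x = 0) (ha : |w a x| ≤ 1) :
    Neighboring w (isolateVertex w x) := by
  refine ⟨a, x, by simpa [isolateVertex] using ha, fun u v huv => ?_⟩
  unfold isolateVertex
  split_ifs with hux
  · rcases hux with rfl | rfl
    · rw [hsymm]
      exact hx v fun hva => huv (Or.inr ⟨rfl, hva⟩)
    · exact hx u fun hua => huv (Or.inl ⟨hua, rfl⟩)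
  · rfl

end WeightedGraph

lemma exists_le_sum_of_le_add_update_not {ι : Type*} [Fintype ι] [DecidableEq ι]
    (f : (ι → Bool) → ι → ℝ) {c : ℝ} (h : ∀ τ i, c ≤ f τ i + f (Function.update τ i (!τ i)) i) :
    ∃ τ, Fintype.card ι * c / 2 ≤ ∑ i, f τ i := by
  have hcol : ∀ i, Fintype.card (ι → Bool) * c ≤ 2 * ∑ τ, f τ i := by
    intro i
    have hinv : Function.Involutive fun τ : ι → Bool => Function.update τ i (!τ i) :=
      fun τ => by simp
    calc Fintype.card (ι → Bool) * c = ∑ τ : ι → Bool, c := by simp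
      _ ≤ ∑ τ, (f τ i + f (Function.update τ i (!τ i)) i) := Finset.sum_le_sum fun τ _ => h τ i
      _ = 2 * ∑ τ, f τ i := by
        rw [Finset.sum_add_distrib, hinv.bijective.sum_comp (fun τ => f τ i)]
        ring
  have htotal : ∑ _τ : ι → Bool, Fintype.card ι * c / 2 ≤ ∑ τ, ∑ i, f τ i := by
    rw [Finset.sum_comm]
    calc ∑ _τ : ι → Bool, Fintype.card ι * c / 2
        = ∑ _i : ι, Fintype.card (ι → Bool) * c / 2 := by
          simp only [Finset.sum_const, Finset.card_univ, nsmul_eq_mul]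
          ring
      _ ≤ ∑ i, ∑ τ, f τ i := Finset.sum_le_sum fun i _ => by linarith [hcol i]
  obtain ⟨τ, -, hτ⟩ := Finset.exists_le_of_sum_le Finset.univ_nonempty htotal
  exact ⟨τ, hτ⟩

section Cut

variable {V : Type} [Fintype V] [DecidableEq V]

def unitEdge (a b : V) (u v : V) : ℝ :=
  if (u = a ∧ v = b) ∨ (v = a ∧ u = b) then 1 else 0

lemma cutWeight_sum {ι : Type*} (s : Finset ι) (w : ι → V → V → ℝ) (S T : Finset V) :
    cutWeight (∑ i ∈ s, w i : V → V → ℝ) S T = ∑ i ∈ s, cutWeight (w i) S T := by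
  simp only [cutWeight, Finset.sum_apply]
  rw [Finset.sum_comm (s := s)]
  exact Finset.sum_congr rfl fun u _ => Finset.sum_comm

lemma cutWeight_unitEdge_compl {a b : V} (hab : a ≠ b) (S : Finset V) :
    cutWeight (unitEdge a b) S Sᶜ = if (a ∈ S ↔ b ∈ S) then 0 else 1 := by
  have hsplit : ∀ u v, unitEdge a b u v =
      (if u = a ∧ v = b then 1 else 0) + (if v = a ∧ u = b then 1 else 0) := by
    intro u v
    unfold unitEdge
    by_cases h₁ : u = a ∧ v = b <;> by_cases h₂ : v = a ∧ u = b <;> simp [h₁, h₂, hab, hab.symm]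
  simp only [cutWeight, hsplit, Finset.sum_add_distrib, ite_and]
  by_cases ha : a ∈ S <;> by_cases hb : b ∈ S <;> simp [ha, hb]

end Cut

section Construction

variable {n : ℕ}

lemma termOf_ne_vtx (b : Bool) (i : Fin n) : termOf n b ≠ vtx n i := by
  cases b <;> simp [termOf, vtx, Fin.ext_iff]

lemma vtx_injective : Function.Injective (vtx n) := fun i j h => by
  simpa [vtx, Fin.ext_iff] using h

lemma gTau_symm (τ : Fin n → Bool) (u v : Fin (n + 2)) : gTau n τ u v = gTau n τ v u :=
  if_congr (exists_congr fun _ => or_comm) rfl rfl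

lemma isWeight_gTau (τ : Fin n → Bool) : IsWeight (gTau n τ) := by
  refine ⟨fun u v => ?_, gTau_symm τ, fun u => if_neg ?_⟩
  · unfold gTau
    split_ifs <;> norm_num
  · rintro ⟨i, ⟨rfl, h⟩ | ⟨rfl, h⟩⟩ <;> exact termOf_ne_vtx _ _ h

lemma gTau_apply_vtx (τ : Fin n → Bool) (u : Fin (n + 2)) (i : Fin n) :
    gTau n τ u (vtx n i) = if u = termOf n (τ i) then 1 else 0 := by
  refine if_congr ⟨?_, ?_⟩ rfl rfl
  · rintro ⟨j, ⟨hu, hij⟩ | ⟨hij, -⟩⟩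
    · rwa [vtx_injective hij]
    · exact absurd hij.symm (termOf_ne_vtx _ _)
  · rintro rfl
    exact ⟨i, Or.inl ⟨rfl, rfl⟩⟩

lemma gTau_update_of_ne (τ : Fin n → Bool) (i : Fin n) (b : Bool) {u v : Fin (n + 2)}
    (hu : u ≠ vtx n i) (hv : v ≠ vtx n i) :
    gTau n (Function.update τ i b) u v = gTau n τ u v := by
  refine if_congr (exists_congr fun j => ?_) rfl rfl
  rcases eq_or_ne j i with rfl | hji
  · constructor <;> rintro (⟨-, h⟩ | ⟨-, h⟩) <;> contradiction
  · rw [Function.update_of_ne hji]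

lemma gTau_eq_sum_unitEdge (τ : Fin n → Bool) :
    gTau n τ = ∑ i, unitEdge (termOf n (τ i)) (vtx n i) := by
  funext u v
  rw [Finset.sum_apply, Finset.sum_apply]
  unfold gTau unitEdge
  split_ifs with h
  · obtain ⟨i, hi⟩ := h
    rw [Finset.sum_eq_single i (fun j _ hji => if_neg fun hj => hji ?_) (by simp), if_pos hi]
    rcases hi with ⟨-, rfl⟩ | ⟨rfl, rfl⟩ <;> rcases hj with ⟨hu, hv⟩ | ⟨hv, hu⟩
    exacts [(vtx_injective hv).symm, (termOf_ne_vtx _ _ hv.symm).elim,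
      (termOf_ne_vtx _ _ hv).elim, (vtx_injective hu).symm]
  · exact (Finset.sum_eq_zero fun i _ => if_neg (not_exists.1 h i)).symm

lemma neighboring_gTau_isolateVertex (τ : Fin n → Bool) (i : Fin n) :
    Neighboring (gTau n τ) (isolateVertex (gTau n τ) (vtx n i)) := by
  refine neighboring_isolateVertex (gTau_symm τ) (a := termOf n (τ i))
    (fun y hy => by rw [gTau_apply_vtx, if_neg hy]) ?_
  rw [gTau_apply_vtx, if_pos rfl, abs_one]

lemma isolateVertex_gTau_update (τ : Fin n → Bool) (i : Fin n) (b : Bool) :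
    isolateVertex (gTau n (Function.update τ i b)) (vtx n i) =
      isolateVertex (gTau n τ) (vtx n i) :=
  isolateVertex_congr fun _ _ hu hv => gTau_update_of_ne τ i b hu hv

end Construction

-- For an `s`-`t` cut `S`: `v_i` and its neighbour in `G_τ` lie on opposite sides of `S`.
def misclassified (n : ℕ) (τ : Fin n → Bool) (i : Fin n) : Set (Finset (Fin (n + 2))) :=
  {S | vtx n i ∈ S ↔ τ i = false}

section Misclassification

variable {n : ℕ}

lemma misclassified_update_not (τ : Fin n → Bool) (i : Fin n) :
    misclassified n (Function.update τ i (!τ i)) i = (misclassified n τ i)ᶜ := by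
  ext S
  cases h : τ i <;> simp [misclassified, h]

lemma cutWeight_gTau_compl (τ : Fin n → Bool) {S : Finset (Fin (n + 2))}
    (hs : termOf n true ∈ S) (ht : termOf n false ∉ S) :
    cutWeight (gTau n τ) S Sᶜ = ∑ i, (misclassified n τ i).indicator 1 S := by
  rw [gTau_eq_sum_unitEdge, cutWeight_sum]
  refine Finset.sum_congr rfl fun i _ => ?_
  rw [cutWeight_unitEdge_compl (termOf_ne_vtx _ _)]
  cases h : τ i <;> simp [misclassified, Set.indicator_apply, h, hs, ht]

lemma sum_toReal_mul_cutWeight_gTau (τ : Fin n → Bool) (p : PMF (Finset (Fin (n + 2))))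
    (hp : ∀ S ∈ p.support, termOf n true ∈ S ∧ termOf n false ∉ S) :
    ∑ S, (p S).toReal * cutWeight (gTau n τ) S Sᶜ = ∑ i, p.realProb (misclassified n τ i) :=
  p.sum_toReal_mul_eq_sum_realProb _ _ fun S hS => cutWeight_gTau_compl τ (hp S hS).1 (hp S hS).2

lemma one_tenth_le_realProb_misclassified_add
    {M : (Fin (n + 2) → Fin (n + 2) → ℝ) → PMF (Finset (Fin (n + 2)))} {ε δ : ℝ}
    (hM : IsEdgeDP M ε δ) (hε : ε ≤ 1) (hδ : δ ≤ 0.1) (τ : Fin n → Bool) (i : Fin n) :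
    1 / 10 ≤ (M (gTau n τ)).realProb (misclassified n τ i) +
      (M (gTau n (Function.update τ i (!τ i)))).realProb
        (misclassified n (Function.update τ i (!τ i)) i) := by
  have hchain : ∀ (σ : Fin n → Bool) (A : Set (Finset (Fin (n + 2)))),
      (M (gTau n σ)).realProb A ≤ Real.exp ε *
        (Real.exp ε * (M (gTau n (Function.update σ i (!σ i)))).realProb A + max δ 0) + max δ 0 :=
    fun σ => hM.realProb_le_of_neighboring₂ (isWeight_gTau σ)
      (isWeight_isolateVertex (isWeight_gTau σ) _) (isWeight_gTau _)
      (neighboring_gTau_isolateVertex σ i)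
      (isolateVertex_gTau_update σ i _ ▸ (neighboring_gTau_isolateVertex _ i).symm)
  set τ' := Function.update τ i (!τ i)
  have hττ' : Function.update τ' i (!τ' i) = τ := by simp [τ']
  have h₁ := hchain τ (misclassified n τ i)ᶜ
  have h₂ := hchain τ' (misclassified n τ' i)ᶜ
  rw [PMF.realProb_compl, ← misclassified_update_not] at h₁
  rw [hττ', PMF.realProb_compl, ← misclassified_update_not, hττ'] at h₂
  set a := (M (gTau n τ)).realProb (misclassified n τ i)
  set b := (M (gTau n τ')).realProb (misclassified n τ' i)
  have ha : 0 ≤ a := PMF.realProb_nonneg _ _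
  have hb : 0 ≤ b := PMF.realProb_nonneg _ _
  have hx₀ : 0 ≤ Real.exp ε := Real.exp_nonneg ε
  have hx : Real.exp ε ≤ 3 := (Real.exp_le_exp.2 hε).trans Real.exp_one_lt_three.le
  have hd : max δ 0 ≤ 0.1 := max_le hδ (by norm_num)
  have hd₀ : 0 ≤ max δ 0 := le_max_right δ 0
  -- `h₁ + h₂` reads `(1 + e^{2ε}) (a + b) ≥ 2 - 2 (e^ε + 1) max δ 0 ≥ 1.2`, and `1 + e^{2ε} ≤ 10`.
  nlinarith [mul_le_mul_of_nonneg_right (mul_le_mul hx hx hx₀ (by norm_num)) (add_nonneg ha hb),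
    mul_le_mul (add_le_add_right hx 1) hd hd₀ (by norm_num)]

end Misclassification

theorem dp_min_st_cut_lower_bound_general (n : ℕ) (ε δ : ℝ)
    (hε : ε ≤ 1) (hδ : δ ≤ 0.1)
    (M : (Fin (n + 2) → Fin (n + 2) → ℝ) → PMF (Finset (Fin (n + 2))))
    -- M outputs s-t cuts
    (hout : ∀ w, IsWeight w →
      ∀ S ∈ (M w).support, termOf n true ∈ S ∧ termOf n false ∉ S)
    -- M is (ε, δ)-differentially private
    (hdp : ∀ w w', IsWeight w → IsWeight w' → Neighboring w w' →
      ∀ O : Set (Finset (Fin (n + 2))),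
        (M w).toOuterMeasure O ≤
          ENNReal.ofReal (Real.exp ε) * (M w').toOuterMeasure O + ENNReal.ofReal δ) :
    ∃ τ : Fin n → Bool,
      (n : ℝ) / 20 ≤
        ∑ S : Finset (Fin (n + 2)),
          ((M (gTau n τ)) S).toReal * cutWeight (gTau n τ) S Sᶜ := by
  obtain ⟨τ, hτ⟩ := exists_le_sum_of_le_add_update_not
    (fun τ i => (M (gTau n τ)).realProb (misclassified n τ i))
    (one_tenth_le_realProb_misclassified_add (M := M) hdp hε hδ)
  refine ⟨τ, ?_⟩
  rw [sum_toReal_mul_cutWeight_gTau τ _ (hout _ (isWeight_gTau τ))]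
  calc (n : ℝ) / 20 = Fintype.card (Fin n) * (1 / 10) / 2 := by rw [Fintype.card_fin]; ring
    _ ≤ _ := hτ

/-- For `n > 30`, `ε ≤ 1`, `δ ≤ 0.1`, every `(ε, δ)`-differentially private
mechanism mapping weighted graphs on the vertex set `{s, t, v₁, …, v_n}` to `s`-`t` cuts
has, on some input `G_τ` (whose minimum `s`-`t` cut weight is `0`), expected output cut
weight at least `n/20`. -/
theorem dp_min_st_cut_lower_bound (n : ℕ) (hn : 30 < n) (ε δ : ℝ)
    (hε : ε ≤ 1) (hδ : δ ≤ 0.1)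
    (M : (Fin (n + 2) → Fin (n + 2) → ℝ) → PMF (Finset (Fin (n + 2))))
    -- M outputs s-t cuts
    (hout : ∀ w, IsWeight w →
      ∀ S ∈ (M w).support, termOf n true ∈ S ∧ termOf n false ∉ S)
    -- M is (ε, δ)-differentially private
    (hdp : ∀ w w', IsWeight w → IsWeight w' → Neighboring w w' →
      ∀ O : Set (Finset (Fin (n + 2))),
        (M w).toOuterMeasure O ≤
          ENNReal.ofReal (Real.exp ε) * (M w').toOuterMeasure O + ENNReal.ofReal δ) :
    ∃ τ : Fin n → Bool,
      (n : ℝ) / 20 ≤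
        ∑ S : Finset (Fin (n + 2)),
          ((M (gTau n τ)) S).toReal * cutWeight (gTau n τ) S Sᶜ :=
  dp_min_st_cut_lower_bound_general n ε δ hε hδ M hout hdp
end

section
/- Suppose there exist ε ≤ 1, δ ≤ 0.1, and for each τ ∈ {0,1}ⁿ and each i ∈ {1,…,n} a number p_τ^{(i)} ∈ [0,1] such that: (i) for every τ, Σ_{i : τ_i = 0} p_τ^{(i)} + Σ_{i : τ_i = 1} (1 − p_τ^{(i)}) < (n+2)/20; and (ii) for all i, j and all τ, τ' ∈ {0,1}ⁿ differing only in coordinate i, p_τ^{(j)} ≤ e^{2ε} · p_{τ'}^{(j)} + δ. Then n ≤ 30. -/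
/-!
Call `p τ i` (resp. `1 - p τ i`) the error at coordinate `i` when `τ i = false` (resp. `true`).
Flipping coordinate `i` of `τ` changes `p · i` by at most a factor `e²` and an additive `δ`,
so the errors at `i` of `τ` and of its flip add up to at least `(1 - δ) / e²`. Pairing the
strings along each coordinate, the total error over all `τ` and `i` is at least
`2ⁿ · n (1 - δ) / (2e²)`, while hypothesis (i) bounds it by `2ⁿ (n + 2) / 20`.
Hence `0.9 n < e² (n + 2) / 10`, which forces `n ≤ 9`.
-/

open Finset

section Flip

variable {ι : Type*} [DecidableEq ι]

def flipAt (i : ι) (τ : ι → Bool) : ι → Bool :=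
  Function.update τ i (!τ i)

@[simp]
theorem flipAt_apply_self (i : ι) (τ : ι → Bool) : flipAt i τ i = !τ i := by
  simp [flipAt]

theorem flipAt_apply_of_ne {i l : ι} (h : l ≠ i) (τ : ι → Bool) : flipAt i τ l = τ l :=
  Function.update_of_ne h _ τ

theorem flipAt_involutive (i : ι) : Function.Involutive (flipAt i) := by
  intro τ
  simp [flipAt]

end Flip

theorem one_sub_le_mul_add_one_sub {K q r δ : ℝ} (hK : 1 ≤ K) (hr : r ≤ 1)
    (h : r ≤ K * q + δ) : 1 - δ ≤ K * (q + (1 - r)) := by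
  linarith [mul_le_mul_of_nonneg_right hK (sub_nonneg.2 hr)]

section CoordError

variable {ι : Type*} (p : (ι → Bool) → ι → ℝ) {K δ : ℝ}

def coordError (τ : ι → Bool) (i : ι) : ℝ :=
  if τ i then 1 - p τ i else p τ i

theorem sum_coordError [Fintype ι] (τ : ι → Bool) :
    ∑ i, coordError p τ i =
      (∑ i ∈ univ.filter fun i => τ i = false, p τ i) +
        ∑ i ∈ univ.filter fun i => τ i = true, (1 - p τ i) := by
  simp only [coordError, sum_ite, Bool.not_eq_true]
  exact add_comm _ _

variable {p}

theorem one_sub_le_mul_coordError_add_coordError_flipAt [DecidableEq ι] (hK : 1 ≤ K)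
    (hp1 : ∀ τ i, p τ i ≤ 1) (hflip : ∀ i τ, p (flipAt i τ) i ≤ K * p τ i + δ)
    (τ : ι → Bool) (i : ι) :
    1 - δ ≤ K * (coordError p τ i + coordError p (flipAt i τ) i) := by
  cases hτ : τ i
  · simpa [coordError, hτ] using one_sub_le_mul_add_one_sub hK (hp1 _ i) (hflip i τ)
  · have h := hflip i (flipAt i τ)
    rw [flipAt_involutive i τ] at h
    simpa [coordError, hτ, add_comm] using one_sub_le_mul_add_one_sub hK (hp1 τ i) h

theorem card_mul_one_sub_le_sum_coordError [Fintype ι] [DecidableEq ι] (hK : 1 ≤ K)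
    (hp1 : ∀ τ i, p τ i ≤ 1) (hflip : ∀ i τ, p (flipAt i τ) i ≤ K * p τ i + δ)
    (i : ι) :
    Fintype.card (ι → Bool) * (1 - δ) ≤ 2 * K * ∑ τ, coordError p τ i := by
  have hpair : ∑ τ, coordError p (flipAt i τ) i = ∑ τ, coordError p τ i :=
    (flipAt_involutive i).toPerm.sum_comp univ (coordError p · i) (by simp)
  calc Fintype.card (ι → Bool) * (1 - δ) = ∑ _τ : ι → Bool, (1 - δ) := by
        rw [sum_const, card_univ, nsmul_eq_mul]
    _ ≤ ∑ τ, K * (coordError p τ i + coordError p (flipAt i τ) i) :=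
      sum_le_sum fun τ _ => one_sub_le_mul_coordError_add_coordError_flipAt hK hp1 hflip τ i
    _ = 2 * K * ∑ τ, coordError p τ i := by
      rw [← mul_sum, sum_add_distrib, hpair]
      ring

theorem card_mul_one_sub_lt_of_sum_coordError_lt [Fintype ι] [DecidableEq ι]
    (hK : 1 ≤ K)
    (hp1 : ∀ τ i, p τ i ≤ 1) (hflip : ∀ i τ, p (flipAt i τ) i ≤ K * p τ i + δ)
    {B : ℝ} (hrow : ∀ τ, ∑ i, coordError p τ i < B) :
    Fintype.card ι * (1 - δ) < 2 * K * B := by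
  have hcard : (0 : ℝ) < Fintype.card (ι → Bool) := by exact_mod_cast Fintype.card_pos
  have hcol := fun i => card_mul_one_sub_le_sum_coordError hK hp1 hflip i
  have htotal :
      Fintype.card (ι → Bool) * (Fintype.card ι * (1 - δ)) <
        Fintype.card (ι → Bool) * (2 * K * B) :=
    calc Fintype.card (ι → Bool) * (Fintype.card ι * (1 - δ))
        = ∑ _i : ι, Fintype.card (ι → Bool) * (1 - δ) := by rw [sum_const, card_univ, nsmul_eq_mul]; ring
      _ ≤ ∑ i, 2 * K * ∑ τ, coordError p τ i := sum_le_sum fun i _ => hcol i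
      _ = 2 * K * ∑ τ, ∑ i, coordError p τ i := by rw [← mul_sum, sum_comm]
      _ < 2 * K * ∑ _τ : ι → Bool, B :=
        mul_lt_mul_of_pos_left (sum_lt_sum_of_nonempty univ_nonempty fun τ _ => hrow τ)
          (by linarith)
      _ = Fintype.card (ι → Bool) * (2 * K * B) := by rw [sum_const, card_univ, nsmul_eq_mul]; ring
  exact lt_of_mul_lt_mul_left htotal hcard.le

end CoordError

theorem Real.exp_two_lt : Real.exp 2 < 7.39 := by
  have h : Real.exp 2 = Real.exp 1 * Real.exp 1 := by rw [← Real.exp_add]; norm_num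
  nlinarith [Real.exp_one_lt_d9, Real.exp_pos 1]

/-- If there exist `ε ≤ 1`, `δ ≤ 0.1` and numbers `p τ i ∈ [0,1]` for
`τ ∈ {0,1}ⁿ`, `i ∈ {1,…,n}` such that (i) for every `τ` the quantity
`Σ_{i : τ_i = 0} p_τ^{(i)} + Σ_{i : τ_i = 1} (1 − p_τ^{(i)})` is less than `(n+2)/20`,
and (ii) for all `i, j` and all `τ, τ'` differing only in coordinate `i`,
`p_τ^{(j)} ≤ e^{2ε} · p_{τ'}^{(j)} + δ`, then `n ≤ 30`. -/
theorem lower_bound_counting (n : ℕ) (ε δ : ℝ) (hε : ε ≤ 1) (hδ : δ ≤ 0.1)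
    (p : (Fin n → Bool) → Fin n → ℝ)
    (hp0 : ∀ τ i, 0 ≤ p τ i) (hp1 : ∀ τ i, p τ i ≤ 1)
    (herr : ∀ τ : Fin n → Bool,
      (∑ i ∈ Finset.univ.filter fun i => τ i = false, p τ i) +
        (∑ i ∈ Finset.univ.filter fun i => τ i = true, (1 - p τ i)) < ((n : ℝ) + 2) / 20)
    (hdp : ∀ (i j : Fin n) (τ τ' : Fin n → Bool),
      (∀ l, l ≠ i → τ l = τ' l) → τ i ≠ τ' i →
        p τ j ≤ Real.exp (2 * ε) * p τ' j + δ) :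
    n ≤ 30 := by
  have hflip : ∀ i τ, p (flipAt i τ) i ≤ Real.exp 2 * p τ i + δ := by
    intro i τ
    have h := hdp i i (flipAt i τ) τ (fun l hl => flipAt_apply_of_ne hl τ) (by simp)
    have hexp : Real.exp (2 * ε) ≤ Real.exp 2 := Real.exp_le_exp.2 (by linarith)
    nlinarith [mul_le_mul_of_nonneg_right hexp (hp0 τ i)]
  have hbound := card_mul_one_sub_lt_of_sum_coordError_lt (Real.one_le_exp zero_le_two) hp1
    hflip (fun τ => (sum_coordError p τ).trans_lt (herr τ))
  rw [Fintype.card_fin] at hbound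
  have hn : (0 : ℝ) ≤ n := n.cast_nonneg
  have : (n : ℝ) < 10 := by
    nlinarith [Real.exp_two_lt, mul_le_mul_of_nonneg_left hδ hn]
  have : n < 10 := by exact_mod_cast this
  omega
end

section
/- Let ε > 0, let x and y be independent random variables each distributed as Lap(1/ε), and for real numbers α, β, γ define P(α, β, γ) = P[x < α ∧ y < β ∧ x + y < γ]. Then for every τ ≥ 0, 1 ≤ P(α+τ, β+τ, γ)/P(α, β, γ) ≤ e^{4τε}. -/
open MeasureTheory ProbabilityTheory
open scoped ENNReal

/-- The Laplace distribution `Lap(b)` on `ℝ`, with density `(1/(2b))·e^{−|x|/b}`. -/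
noncomputable def lapMeasure (b : ℝ) : Measure ℝ :=
  volume.withDensity fun x => ENNReal.ofReal ((1 / (2 * b)) * Real.exp (-|x| / b))

/-!
Shifting both thresholds by `τ` only enlarges the event, which gives the lower bound. For the
upper bound, translate the joint density of `(x, y)` by `(τ, τ)`: the translated region lies
inside the original one, and each Laplace density factor grows by at most `e^{τε}` under a shift
by `τ`, because `|u| ≤ |u + τ| + τ`; this yields the factor `e^{2τε} ≤ e^{4τε}`.
-/

noncomputable def lapDensity (b : ℝ) (u : ℝ) : ℝ≥0∞ :=
  ENNReal.ofReal ((1 / (2 * b)) * Real.exp (-|u| / b))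

lemma measurable_lapDensity (b : ℝ) : Measurable (lapDensity b) :=
  Measurable.ennreal_ofReal (by fun_prop)

instance (b : ℝ) : SigmaFinite (lapMeasure b) :=
  SigmaFinite.withDensity_ofReal _

lemma lapDensity_add_le {b : ℝ} (hb : 0 ≤ b) (u v : ℝ) :
    lapDensity b (u + v) ≤ ENNReal.ofReal (Real.exp (|v| / b)) * lapDensity b u := by
  rw [lapDensity, lapDensity, ← ENNReal.ofReal_mul (Real.exp_nonneg _)]
  refine ENNReal.ofReal_le_ofReal ?_
  rw [mul_left_comm, ← Real.exp_add]
  gcongr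
  have htri : |u| ≤ |u + v| + |v| := by simpa using abs_sub (u + v) v
  have hdiv := div_le_div_of_nonneg_right htri hb
  rw [add_div] at hdiv
  rw [neg_div, neg_div]
  linarith

lemma lapMeasure_prod_eq_withDensity (b : ℝ) :
    (lapMeasure b).prod (lapMeasure b) =
      volume.withDensity fun p : ℝ × ℝ => lapDensity b p.1 * lapDensity b p.2 :=
  prod_withDensity (measurable_lapDensity b) (measurable_lapDensity b)

lemma withDensity_le_mul_withDensity_preimage_add_right {G : Type*} [MeasurableSpace G]
    [AddGroup G] [MeasurableAdd G] (μ : Measure G) [μ.IsAddRightInvariant] {g : G → ℝ≥0∞}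
    (hg : Measurable g) {v : G} {c : ℝ≥0∞} (hgv : ∀ p, g (p + v) ≤ c * g p) {s : Set G}
    (hs : MeasurableSet s) :
    μ.withDensity g s ≤ c * μ.withDensity g ((· + v) ⁻¹' s) := by
  have hs' : MeasurableSet ((· + v) ⁻¹' s) := measurable_add_const v hs
  rw [withDensity_apply _ hs, withDensity_apply _ hs', ← lintegral_const_mul _ hg,
    ← lintegral_indicator hs, ← lintegral_add_right_eq_self _ v, ← lintegral_indicator hs']
  refine lintegral_mono fun p => ?_
  by_cases hp : p + v ∈ s
  · rw [Set.indicator_of_mem hp, Set.indicator_of_mem (show p ∈ (· + v) ⁻¹' s from hp)]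
    exact hgv p
  · rw [Set.indicator_of_notMem hp]
    exact zero_le

def truncatedQuadrant (a b c : ℝ) : Set (ℝ × ℝ) :=
  {p | p.1 < a ∧ p.2 < b ∧ p.1 + p.2 < c}

lemma measurableSet_truncatedQuadrant (a b c : ℝ) : MeasurableSet (truncatedQuadrant a b c) :=
  (measurableSet_lt measurable_fst measurable_const).inter <|
    (measurableSet_lt measurable_snd measurable_const).inter <|
      measurableSet_lt (measurable_fst.add measurable_snd) measurable_const

lemma truncatedQuadrant_mono {a a' b b' : ℝ} (ha : a ≤ a') (hb : b ≤ b') (c : ℝ) :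
    truncatedQuadrant a b c ⊆ truncatedQuadrant a' b' c :=
  fun _ ⟨h₁, h₂, h₃⟩ => ⟨h₁.trans_le ha, h₂.trans_le hb, h₃⟩

lemma preimage_add_truncatedQuadrant_subset {τ : ℝ} (hτ : 0 ≤ τ) (a b c : ℝ) :
    (· + (τ, τ)) ⁻¹' truncatedQuadrant (a + τ) (b + τ) c ⊆ truncatedQuadrant a b c := by
  rintro p ⟨h₁, h₂, h₃⟩
  simp only [Prod.fst_add, Prod.snd_add] at h₁ h₂ h₃
  exact ⟨by linarith, by linarith, by linarith⟩

lemma lapMeasure_prod_truncatedQuadrant_add_le {b τ : ℝ} (hb : 0 ≤ b) (hτ : 0 ≤ τ)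
    (α β γ : ℝ) :
    (lapMeasure b).prod (lapMeasure b) (truncatedQuadrant (α + τ) (β + τ) γ) ≤
      ENNReal.ofReal (Real.exp (2 * τ / b)) *
        (lapMeasure b).prod (lapMeasure b) (truncatedQuadrant α β γ) := by
  have hshift (p : ℝ × ℝ) :
      lapDensity b (p + (τ, τ)).1 * lapDensity b (p + (τ, τ)).2 ≤
        ENNReal.ofReal (Real.exp (2 * τ / b)) * (lapDensity b p.1 * lapDensity b p.2) := by
    have hexp : ENNReal.ofReal (Real.exp (2 * τ / b)) =
        ENNReal.ofReal (Real.exp (|τ| / b)) * ENNReal.ofReal (Real.exp (|τ| / b)) := by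
      rw [← ENNReal.ofReal_mul (Real.exp_nonneg _), ← Real.exp_add, abs_of_nonneg hτ]
      ring_nf
    rw [hexp, mul_mul_mul_comm]
    exact mul_le_mul' (lapDensity_add_le hb p.1 τ) (lapDensity_add_le hb p.2 τ)
  have hg : Measurable fun p : ℝ × ℝ => lapDensity b p.1 * lapDensity b p.2 := by
    have := measurable_lapDensity b
    fun_prop
  rw [lapMeasure_prod_eq_withDensity]
  exact (withDensity_le_mul_withDensity_preimage_add_right volume hg hshift
    (measurableSet_truncatedQuadrant _ _ _)).trans
    (by gcongr; exact preimage_add_truncatedQuadrant_subset hτ α β γ)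

theorem laplace_mish_mash_general
    (Ω : Type) [MeasurableSpace Ω] (μ : Measure Ω)
    (ε : ℝ) (hε : 0 < ε) (x y : Ω → ℝ) (hx : Measurable x) (hy : Measurable y)
    (hxd : μ.map x = lapMeasure (1 / ε)) (hyd : μ.map y = lapMeasure (1 / ε))
    (hind : IndepFun x y μ) (α β γ τ : ℝ) (hτ : 0 ≤ τ) :
    μ {ω | x ω < α ∧ y ω < β ∧ x ω + y ω < γ} ≤
        μ {ω | x ω < α + τ ∧ y ω < β + τ ∧ x ω + y ω < γ} ∧
      μ {ω | x ω < α + τ ∧ y ω < β + τ ∧ x ω + y ω < γ} ≤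
        ENNReal.ofReal (Real.exp (4 * τ * ε)) *
          μ {ω | x ω < α ∧ y ω < β ∧ x ω + y ω < γ} := by
  set ν := (lapMeasure (1 / ε)).prod (lapMeasure (1 / ε))
  have hjoint : μ.map (fun ω => (x ω, y ω)) = ν := by
    have h := (indepFun_iff_map_prod_eq_prod_map_map' hx.aemeasurable hy.aemeasurable
      (hxd ▸ inferInstance) (hyd ▸ inferInstance)).mp hind
    rwa [hxd, hyd] at h
  have hevent (a b c : ℝ) :
      μ {ω | x ω < a ∧ y ω < b ∧ x ω + y ω < c} = ν (truncatedQuadrant a b c) := by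
    rw [← hjoint, Measure.map_apply (hx.prodMk hy) (measurableSet_truncatedQuadrant a b c)]
    rfl
  rw [hevent, hevent]
  refine ⟨measure_mono (truncatedQuadrant_mono (by linarith) (by linarith) γ), ?_⟩
  calc ν (truncatedQuadrant (α + τ) (β + τ) γ)
      ≤ ENNReal.ofReal (Real.exp (2 * τ / (1 / ε))) * ν (truncatedQuadrant α β γ) :=
        lapMeasure_prod_truncatedQuadrant_add_le (by positivity) hτ α β γ
    _ ≤ ENNReal.ofReal (Real.exp (4 * τ * ε)) * ν (truncatedQuadrant α β γ) := by
        gcongr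
        rw [div_div_eq_mul_div, div_one]
        nlinarith

/-- For independent `x, y ∼ Lap(1/ε)` and
`P(α,β,γ) = P[x < α ∧ y < β ∧ x + y < γ]`, for every `τ ≥ 0` we have
`1 ≤ P(α+τ, β+τ, γ)/P(α, β, γ) ≤ e^{4τε}`, stated in product form as
`P(α,β,γ) ≤ P(α+τ,β+τ,γ)` and `P(α+τ,β+τ,γ) ≤ e^{4τε}·P(α,β,γ)`. -/
theorem laplace_mish_mash
    (Ω : Type) [MeasurableSpace Ω] (μ : Measure Ω) [IsProbabilityMeasure μ]
    (ε : ℝ) (hε : 0 < ε) (x y : Ω → ℝ) (hx : Measurable x) (hy : Measurable y)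
    (hxd : μ.map x = lapMeasure (1 / ε)) (hyd : μ.map y = lapMeasure (1 / ε))
    (hind : IndepFun x y μ) (α β γ τ : ℝ) (hτ : 0 ≤ τ) :
    μ {ω | x ω < α ∧ y ω < β ∧ x ω + y ω < γ} ≤
        μ {ω | x ω < α + τ ∧ y ω < β + τ ∧ x ω + y ω < γ} ∧
      μ {ω | x ω < α + τ ∧ y ω < β + τ ∧ x ω + y ω < γ} ≤
        ENNReal.ofReal (Real.exp (4 * τ * ε)) *
          μ {ω | x ω < α ∧ y ω < β ∧ x ω + y ω < γ} :=
  laplace_mish_mash_general Ω μ ε hε x y hx hy hxd hyd hind α β γ τ hτ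
end

section
/- Let ε > 0 and let X₁, X₂, X₃, X₄ be independent random variables each distributed as Exp(ε). Then for all real numbers Δ_v, Δ_{uv}, Δ_∅ and every τ ≥ 0, P[X₁ + X₂ < X₃ + X₄ − Δ_v ∧ X₁ < X₃ − Δ_{uv} ∧ X₂ < X₄ − Δ_∅] ≤ e^{4τε} · P[X₁ + X₂ < X₃ + X₄ − Δ_v ∧ X₁ < X₃ − Δ_{uv} − τ ∧ X₂ < X₄ − Δ_∅ − τ]. -/
open MeasureTheory ProbabilityTheory
open scoped ENNReal

/-!
Group the variables into the independent pairs `P = (X₁, X₂)` and `Q = (X₃, X₄)`. Translating `Q`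
by `(τ, τ)` maps the first event into the second one, and the translate of `Exp(ε)` by `τ ≥ 0`
has density at most `e^{τε}` times that of `Exp(ε)`. Hence the translated law of `(P, Q)` is at
most `e^{2τε} ≤ e^{4τε}` times the law of `(P, Q)`.
-/

theorem MeasureTheory.Measure.withDensity_map_add_right {G : Type*} [MeasurableSpace G]
    [AddGroup G] [MeasurableAdd G] (μ : Measure G) [μ.IsAddRightInvariant] (f : G → ℝ≥0∞) (g : G) :
    (μ.withDensity f).map (· + g) = μ.withDensity (fun y ↦ f (y - g)) := by
  ext s hs
  rw [Measure.map_apply (measurable_add_const g) hs,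
    withDensity_apply _ (hs.preimage (measurable_add_const g)), withDensity_apply _ hs]
  simpa using (measurePreserving_add_right μ g).setLIntegral_comp_preimage_emb
    (MeasurableEquiv.addRight g).measurableEmbedding (fun y ↦ f (y - g)) s

lemma ProbabilityTheory.exponentialPDF_sub_le (r : ℝ) {t : ℝ} (ht : 0 ≤ t) (x : ℝ) :
    exponentialPDF r (x - t) ≤ ENNReal.ofReal (Real.exp (t * r)) * exponentialPDF r x := by
  rcases lt_or_ge (x - t) 0 with hneg | hnonneg
  · simp [exponentialPDF_of_neg hneg]
  · rw [exponentialPDF_of_nonneg hnonneg, exponentialPDF_of_nonneg (by linarith),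
      ← ENNReal.ofReal_mul (Real.exp_nonneg _)]
    apply le_of_eq
    congr 1
    rw [mul_left_comm, ← Real.exp_add]
    ring_nf

lemma ProbabilityTheory.expMeasure_map_add_const_le (r : ℝ) {t : ℝ} (ht : 0 ≤ t) :
    (expMeasure r).map (· + t) ≤ ENNReal.ofReal (Real.exp (t * r)) • expMeasure r := by
  rw [show expMeasure r = volume.withDensity (exponentialPDF r) from rfl,
    Measure.withDensity_map_add_right, ← withDensity_smul' _ _ ENNReal.ofReal_ne_top]
  exact withDensity_mono (Filter.Eventually.of_forall (exponentialPDF_sub_le r ht))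

theorem MeasureTheory.Measure.map_prodMap_le_smul_prod {α β : Type*} [MeasurableSpace α]
    [MeasurableSpace β] {μ : Measure α} {ν : Measure β} [SFinite μ] [SFinite ν]
    {f : α → α} {g : β → β} (hf : Measurable f) (hg : Measurable g) {a b : ℝ≥0∞}
    (hμ : μ.map f ≤ a • μ) (hν : ν.map g ≤ b • ν) :
    (μ.prod ν).map (Prod.map f g) ≤ (a * b) • μ.prod ν := by
  rw [← Measure.map_prod_map μ ν hf hg, mul_smul, ← Measure.prod_smul_right b,
    ← Measure.prod_smul_left a]
  exact Measure.prod_mono hμ hν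

theorem MeasureTheory.Measure.le_mul_of_map_le_smul {α : Type*} [MeasurableSpace α]
    {ρ : Measure α} {S : α → α} (hS : AEMeasurable S ρ) {c : ℝ≥0∞} (hρ : ρ.map S ≤ c • ρ)
    {A B : Set α} (hAB : A ⊆ S ⁻¹' B) : ρ A ≤ c * ρ B :=
  calc ρ A ≤ ρ (S ⁻¹' B) := measure_mono hAB
    _ ≤ ρ.map S B := Measure.le_map_apply hS B
    _ ≤ c * ρ B := hρ B

lemma ProbabilityTheory.iIndepFun.map_prodMk_prodMk_eq_prod {Ω ι β : Type*} [MeasurableSpace Ω]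
    [MeasurableSpace β] {μ : Measure Ω} [IsZeroOrProbabilityMeasure μ] {X : ι → Ω → β}
    (hind : iIndepFun X μ) (hX : ∀ i, Measurable (X i)) {i j k l : ι}
    (hik : i ≠ k) (hil : i ≠ l) (hjk : j ≠ k) (hjl : j ≠ l) (hkl : k ≠ l) :
    μ.map (fun ω ↦ ((X i ω, X j ω), (X k ω, X l ω))) =
      (μ.map fun ω ↦ (X i ω, X j ω)).prod ((μ.map (X k)).prod (μ.map (X l))) := by
  rw [(indepFun_iff_map_prod_eq_prod_map_map (by fun_prop) (by fun_prop)).1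
      (hind.indepFun_prodMk_prodMk hX i j k l hik hil hjk hjl),
    (indepFun_iff_map_prod_eq_prod_map_map (hX k).aemeasurable (hX l).aemeasurable).1
      (hind.indepFun hkl)]

/-- For independent `X₁, X₂, X₃, X₄ ∼ Exp(ε)`, all reals `Δ_v, Δ_{uv}, Δ_∅`
and every `τ ≥ 0`,
`P[X₁+X₂ < X₃+X₄−Δ_v ∧ X₁ < X₃−Δ_{uv} ∧ X₂ < X₄−Δ_∅] ≤
 e^{4τε}·P[X₁+X₂ < X₃+X₄−Δ_v ∧ X₁ < X₃−Δ_{uv}−τ ∧ X₂ < X₄−Δ_∅−τ]`. -/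
theorem exp_four_vars_shift
    (Ω : Type) [MeasurableSpace Ω] (μ : Measure Ω) [IsProbabilityMeasure μ]
    (ε : ℝ) (hε : 0 < ε) (X : Fin 4 → Ω → ℝ) (hX : ∀ i, Measurable (X i))
    (hXd : ∀ i, μ.map (X i) = expMeasure ε)
    (hind : iIndepFun X μ)
    (Δv Δuv Δe τ : ℝ) (hτ : 0 ≤ τ) :
    μ {ω | X 0 ω + X 1 ω < X 2 ω + X 3 ω - Δv ∧
           X 0 ω < X 2 ω - Δuv ∧ X 1 ω < X 3 ω - Δe} ≤
      ENNReal.ofReal (Real.exp (4 * τ * ε)) *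
        μ {ω | X 0 ω + X 1 ω < X 2 ω + X 3 ω - Δv ∧
               X 0 ω < X 2 ω - Δuv - τ ∧ X 1 ω < X 3 ω - Δe - τ} := by
  have := isProbabilityMeasure_expMeasure hε
  set W := fun ω ↦ ((X 0 ω, X 1 ω), (X 2 ω, X 3 ω))
  have hW : Measurable W := by fun_prop
  have hshift : (μ.map W).map (Prod.map id (Prod.map (· + τ) (· + τ))) ≤
      (ENNReal.ofReal (Real.exp (τ * ε)) * ENNReal.ofReal (Real.exp (τ * ε))) • μ.map W := by
    rw [hind.map_prodMk_prodMk_eq_prod hX (by decide) (by decide) (by decide) (by decide)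
      (by decide), hXd, hXd, ← one_mul (_ * _)]
    refine Measure.map_prodMap_le_smul_prod measurable_id (by fun_prop) (by simp) ?_
    exact Measure.map_prodMap_le_smul_prod (by fun_prop) (by fun_prop)
      (expMeasure_map_add_const_le ε hτ) (expMeasure_map_add_const_le ε hτ)
  have hevents := Measure.le_mul_of_map_le_smul (by fun_prop) hshift
    (A := {p | p.1.1 + p.1.2 < p.2.1 + p.2.2 - Δv ∧ p.1.1 < p.2.1 - Δuv ∧ p.1.2 < p.2.2 - Δe})
    (B := {p | p.1.1 + p.1.2 < p.2.1 + p.2.2 - Δv ∧ p.1.1 < p.2.1 - Δuv - τ ∧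
      p.1.2 < p.2.2 - Δe - τ})
    fun p ⟨h, h₁, h₂⟩ ↦ by
      simp only [Set.mem_preimage, Set.mem_ofPred_eq, Prod.map, id]
      refine ⟨?_, ?_, ?_⟩ <;> linarith
  rw [Measure.map_apply hW (by measurability), Measure.map_apply hW (by measurability)] at hevents
  refine hevents.trans (mul_le_mul_left ?_ _)
  rw [← ENNReal.ofReal_mul (Real.exp_nonneg _), ← Real.exp_add]
  exact ENNReal.ofReal_le_ofReal (Real.exp_le_exp.2 (by nlinarith))
end

section
/- Let ε > 0, let x and y be independent random variables each distributed as Lap(1/ε), let f and F denote the density and cumulative distribution function of Lap(1/ε), and for real numbers α, β, γ define P(α, β, γ) = P[x < α ∧ y < β ∧ x + y < γ]. If γ < α + β, then P(α, β, γ) = F(α)·F(γ − α) + ∫_{γ−α}^{β} F(γ − y)·f(y) dy. -/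
open MeasureTheory ProbabilityTheory

/-- The density of the Laplace distribution `Lap(b)`. -/
noncomputable def lapPDF (b : ℝ) (x : ℝ) : ℝ := (1 / (2 * b)) * Real.exp (-|x| / b)

/-- The cumulative distribution function of the Laplace distribution `Lap(b)`. -/
noncomputable def lapCDF (b : ℝ) (x : ℝ) : ℝ :=
  if x ≤ 0 then (1 / 2) * Real.exp (x / b) else 1 - (1 / 2) * Real.exp (-x / b)

/-!
Condition on `y`: by independence and Fubini,
`P(α, β, γ) = ∫_{v < β} F(min α (γ - v)) dLap(v)`. Since `γ - α < β`, split the range at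
`v = γ - α`: below it the minimum is `α`, which gives `F(α)·F(γ - α)`; above it the minimum is
`γ - v`, and the density of `y` turns that part into the stated integral. That `F` is the
distribution function of `Lap(b)` follows from `F' = f` and `F → 0` at `-∞`.
-/

open Set Filter Topology ENNReal

section Laplace

variable {b : ℝ}

lemma lapMeasure_eq_withDensity (b : ℝ) :
    lapMeasure b = volume.withDensity fun x => ENNReal.ofReal (lapPDF b x) := rfl

lemma continuous_lapPDF (b : ℝ) : Continuous (lapPDF b) := by
  unfold lapPDF; fun_prop

lemma lapPDF_nonneg (hb : 0 < b) (x : ℝ) : 0 ≤ lapPDF b x := by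
  unfold lapPDF; positivity

lemma lapPDF_le_exp (hb : 0 < b) (x : ℝ) :
    lapPDF b x ≤ 1 / (2 * b) * Real.exp (b⁻¹ * x) := by
  unfold lapPDF
  gcongr
  rw [inv_mul_eq_div]
  exact div_le_div_of_nonneg_right (neg_abs_le x) hb.le

lemma integrableOn_lapPDF_Iic (hb : 0 < b) (c : ℝ) : IntegrableOn (lapPDF b) (Iic c) :=
  ((integrableOn_exp_mul_Iic (inv_pos.2 hb) c).const_mul _).mono'
    (continuous_lapPDF b).aestronglyMeasurable
    (ae_of_all _ fun x => by
      rw [Real.norm_of_nonneg (lapPDF_nonneg hb x)]; exact lapPDF_le_exp hb x)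

lemma hasDerivAt_lapCDF (x : ℝ) : HasDerivAt (lapCDF b) (lapPDF b x) x := by
  have hl : ∀ x, HasDerivAt (fun t => 1 / 2 * Real.exp (t / b))
      (1 / (2 * b) * Real.exp (x / b)) x := fun x =>
    (((hasDerivAt_id' x).div_const b).exp.const_mul (1 / 2)).congr_deriv (by ring)
  have hr : ∀ x, HasDerivAt (fun t => 1 - 1 / 2 * Real.exp (-t / b))
      (1 / (2 * b) * Real.exp (-x / b)) x := fun x =>
    ((((hasDerivAt_neg x).div_const b).exp.const_mul (1 / 2)).const_sub 1).congr_deriv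
      (by ring)
  rcases lt_trichotomy x 0 with hx | rfl | hx
  · have : lapCDF b =ᶠ[𝓝 x] fun t => 1 / 2 * Real.exp (t / b) :=
      (eventually_le_nhds hx).mono fun t ht => if_pos ht
    simpa [lapPDF, abs_of_neg hx] using (hl x).congr_of_eventuallyEq this
  · have hle : HasDerivWithinAt (lapCDF b) (lapPDF b 0) (Iic 0) 0 :=
      ((hl 0).hasDerivWithinAt.congr_of_mem (f₁ := lapCDF b) (fun t ht => if_pos ht)
        self_mem_Iic).congr_deriv (by simp [lapPDF])
    have hge : HasDerivWithinAt (lapCDF b) (lapPDF b 0) (Ici 0) 0 := by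
      refine ((hr 0).hasDerivWithinAt.congr_of_mem (f₁ := lapCDF b) (fun t ht => ?_)
        self_mem_Ici).congr_deriv (by simp [lapPDF])
      rcases (mem_Ici.1 ht).eq_or_lt with rfl | ht
      · norm_num [lapCDF]
      · exact if_neg (not_le.2 ht)
    simpa using hle.union hge
  · have : lapCDF b =ᶠ[𝓝 x] fun t => 1 - 1 / 2 * Real.exp (-t / b) :=
      (eventually_gt_nhds hx).mono fun t ht => if_neg (not_le.2 ht)
    simpa [lapPDF, abs_of_pos hx] using (hr x).congr_of_eventuallyEq this

lemma tendsto_lapCDF_atBot (hb : 0 < b) : Tendsto (lapCDF b) atBot (𝓝 0) := by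
  have : Tendsto (fun t => 1 / 2 * Real.exp (t / b)) atBot (𝓝 0) := by
    simpa using
      (Real.tendsto_exp_atBot.comp (tendsto_id.atBot_div_const hb)).const_mul (1 / 2 : ℝ)
  exact this.congr' ((eventually_le_atBot 0).mono fun t ht => (if_pos ht).symm)

lemma integral_lapPDF_Iic (hb : 0 < b) (c : ℝ) : ∫ t in Iic c, lapPDF b t = lapCDF b c := by
  rw [integral_Iic_of_hasDerivAt_of_tendsto' (fun x _ => hasDerivAt_lapCDF x)
    (integrableOn_lapPDF_Iic hb c) (tendsto_lapCDF_atBot hb), sub_zero]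

lemma lapMeasure_Iio (hb : 0 < b) (c : ℝ) :
    lapMeasure b (Iio c) = ENNReal.ofReal (lapCDF b c) := by
  rw [lapMeasure_eq_withDensity, withDensity_apply _ measurableSet_Iio,
    ← ofReal_integral_eq_lintegral_ofReal
      ((integrableOn_lapPDF_Iic hb c).mono_set Iio_subset_Iic_self)
      (ae_of_all _ (lapPDF_nonneg hb)),
    ← integral_Iic_eq_integral_Iio, integral_lapPDF_Iic hb]

lemma toReal_lapMeasure_Iio (hb : 0 < b) (c : ℝ) :
    (lapMeasure b (Iio c)).toReal = lapCDF b c := by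
  rw [lapMeasure_Iio hb, ENNReal.toReal_ofReal]
  exact integral_lapPDF_Iic hb c ▸
    setIntegral_nonneg measurableSet_Iic fun t _ => lapPDF_nonneg hb t

end Laplace

theorem toReal_setLIntegral_withDensity_ofReal {X : Type*} [MeasurableSpace X] {ν : Measure X}
    {g : X → ℝ} (hg : Measurable g) (hg_nonneg : ∀ t, 0 ≤ g t) {f : X → ℝ≥0∞}
    (hf : Measurable f) (hf_top : ∀ t, f t ≠ ∞) {s : Set X} (hs : MeasurableSet s) :
    (∫⁻ t in s, f t ∂ν.withDensity fun t => ENNReal.ofReal (g t)).toReal =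
      ∫ t in s, (f t).toReal * g t ∂ν := by
  rw [← integral_toReal hf.aemeasurable (ae_of_all _ fun t => (hf_top t).lt_top),
    setIntegral_withDensity_eq_setIntegral_toReal_smul (by fun_prop)
      (ae_of_all _ fun _ => ofReal_lt_top) _ hs]
  refine setIntegral_congr_fun hs fun t _ => ?_
  rw [smul_eq_mul, ENNReal.toReal_ofReal (hg_nonneg t), mul_comm]

section Independent

variable {Ω : Type*} [MeasurableSpace Ω] {μ : Measure Ω} [IsFiniteMeasure μ] {x y : Ω → ℝ}

theorem measure_lt_lt_add_lt_eq_setLIntegral (hx : AEMeasurable x μ) (hy : AEMeasurable y μ)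
    (hind : IndepFun x y μ) (α β γ : ℝ) :
    μ {ω | x ω < α ∧ y ω < β ∧ x ω + y ω < γ} =
      ∫⁻ v in Iio β, μ.map x (Iio (min α (γ - v))) ∂μ.map y := by
  set T : Set (ℝ × ℝ) := {p | p.2 < α ∧ p.1 < β ∧ p.2 + p.1 < γ}
  have hT : MeasurableSet T := by
    refine (measurableSet_lt measurable_snd measurable_const).inter
      ((measurableSet_lt measurable_fst measurable_const).inter ?_)
    exact measurableSet_lt (measurable_snd.add measurable_fst) measurable_const
  have hslice : ∀ v, μ.map x (Prod.mk v ⁻¹' T) =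
      (Iio β).indicator (fun v => μ.map x (Iio (min α (γ - v)))) v := by
    intro v
    by_cases hv : v < β
    · rw [indicator_of_mem (mem_Iio.2 hv)]
      congr 1
      ext u
      simp only [T, mem_preimage, mem_ofPred_eq, mem_Iio, lt_min_iff, lt_sub_iff_add_lt]
      tauto
    · rw [indicator_of_notMem (notMem_Iio.2 (not_lt.1 hv))]
      convert measure_empty (μ := μ.map x)
      ext u
      simp [T, hv]
  have hjoint : μ.map (fun ω => (y ω, x ω)) = (μ.map y).prod (μ.map x) :=
    (indepFun_iff_map_prod_eq_prod_map_map hy hx).1 hind.symm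
  have hpre :
      {ω | x ω < α ∧ y ω < β ∧ x ω + y ω < γ} = (fun ω => (y ω, x ω)) ⁻¹' T := rfl
  rw [hpre, ← Measure.map_apply_of_aemeasurable (hy.prodMk hx) hT, hjoint,
    Measure.prod_apply hT, lintegral_congr hslice, lintegral_indicator measurableSet_Iio]

theorem measure_lt_lt_add_lt_eq (hx : AEMeasurable x μ) (hy : AEMeasurable y μ)
    (hind : IndepFun x y μ) {α β γ : ℝ} (hγ : γ ≤ α + β) :
    μ {ω | x ω < α ∧ y ω < β ∧ x ω + y ω < γ} =
      μ.map x (Iio α) * μ.map y (Iio (γ - α)) +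
        ∫⁻ v in Ico (γ - α) β, μ.map x (Iio (γ - v)) ∂μ.map y := by
  rw [measure_lt_lt_add_lt_eq_setLIntegral hx hy hind,
    ← Iio_union_Ico_eq_Iio (show γ - α ≤ β by linarith),
    lintegral_union measurableSet_Ico
      ((Iio_disjoint_Ici (le_refl (γ - α))).mono_right Ico_subset_Ici_self),
    ← setLIntegral_const (μ := μ.map y)]
  congr 1
  · refine setLIntegral_congr_fun measurableSet_Iio fun v hv => ?_
    rw [min_eq_left (show α ≤ γ - v by linarith [mem_Iio.1 hv])]
  · refine setLIntegral_congr_fun measurableSet_Ico fun v hv => ?_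
    rw [min_eq_right (show γ - v ≤ α by linarith [hv.1])]

theorem toReal_measure_lt_lt_add_lt_eq {g : ℝ → ℝ} (hx : AEMeasurable x μ)
    (hy : AEMeasurable y μ) (hind : IndepFun x y μ) (hg : Measurable g)
    (hg_nonneg : ∀ t, 0 ≤ g t)
    (hy_density : μ.map y = volume.withDensity fun t => ENNReal.ofReal (g t))
    {α β γ : ℝ} (hγ : γ ≤ α + β) :
    (μ {ω | x ω < α ∧ y ω < β ∧ x ω + y ω < γ}).toReal =
      (μ.map x (Iio α)).toReal * (μ.map y (Iio (γ - α))).toReal +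
        ∫ z in (γ - α)..β, (μ.map x (Iio (γ - z))).toReal * g z := by
  have hsum := measure_lt_lt_add_lt_eq hx hy hind hγ
  have hfin := ENNReal.add_ne_top.1 (hsum ▸ measure_ne_top μ _)
  have hF : Measurable fun z => μ.map x (Iio (γ - z)) :=
    Antitone.measurable fun _ _ hzw => measure_mono (Iio_subset_Iio (by linarith))
  rw [hsum, ENNReal.toReal_add hfin.1 hfin.2, ENNReal.toReal_mul, hy_density,
    toReal_setLIntegral_withDensity_ofReal hg hg_nonneg hF (fun z => measure_ne_top _ _)
      measurableSet_Ico, ← hy_density, intervalIntegral.integral_of_le (by linarith),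
    integral_Ico_eq_integral_Ioo, integral_Ioc_eq_integral_Ioo]

end Independent

/-- For independent `x, y ∼ Lap(1/ε)` and
`P(α,β,γ) = P[x < α ∧ y < β ∧ x + y < γ]`, if `γ < α + β` then
`P(α, β, γ) = F(α)·F(γ − α) + ∫_{γ−α}^{β} F(γ − y)·f(y) dy`. -/
theorem laplace_prob_expansion
    (Ω : Type) [MeasurableSpace Ω] (μ : Measure Ω) [IsProbabilityMeasure μ]
    (ε : ℝ) (hε : 0 < ε) (x y : Ω → ℝ) (hx : Measurable x) (hy : Measurable y)
    (hxd : μ.map x = lapMeasure (1 / ε)) (hyd : μ.map y = lapMeasure (1 / ε))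
    (hind : IndepFun x y μ) (α β γ : ℝ) (hγ : γ < α + β) :
    (μ {ω | x ω < α ∧ y ω < β ∧ x ω + y ω < γ}).toReal =
      lapCDF (1 / ε) α * lapCDF (1 / ε) (γ - α) +
        ∫ z in (γ - α)..β, lapCDF (1 / ε) (γ - z) * lapPDF (1 / ε) z := by
  have hb : 0 < 1 / ε := by positivity
  rw [toReal_measure_lt_lt_add_lt_eq hx.aemeasurable hy.aemeasurable hind
    (continuous_lapPDF _).measurable (lapPDF_nonneg hb) hyd hγ.le, hxd, hyd]
  simp only [toReal_lapMeasure_Iio hb]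
end
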